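/- Let n be a positive integer, k > 0, Ξ > 0, and l > 0 real constants, and define the softplus function σ(z) = k·ln(1 + exp(z/k)). Let b, ξ ∈ ℝⁿ with b ≠ 0 and ‖ξ‖ ≤ Ξ, and let M be a symmetric n × n real matrix satisfying bᵀMb ≥ l·‖b‖². Then σ(bᵀξ/(bᵀMb))·‖b‖ ≤ k·ln(2)·‖b‖ + Ξ/l. -/

import Mathlib

/-!
Softplus is increasing, so by Cauchy–Schwarz and `bᵀMb ≥ l‖b‖²` its argument may be replaced by
`(Ξ / l) / ‖b‖`. The claim then follows from `σ(z) ≤ k ln 2 + max z 0`, which holds because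
`1 + eˣ ≤ 2 e^{max x 0}`.
-/

open Real

noncomputable section

def softplus (k z : ℝ) : ℝ := k * log (1 + exp (z / k))

theorem log_one_add_exp_le (x : ℝ) : log (1 + exp x) ≤ log 2 + max x 0 := by
  have h : 1 + exp x ≤ 2 * exp (max x 0) := by
    have := one_le_exp (le_max_right x 0)
    have := exp_le_exp.2 (le_max_left x 0)
    linarith
  calc log (1 + exp x) ≤ log (2 * exp (max x 0)) := log_le_log (by positivity) h
    _ = log 2 + max x 0 := by rw [log_mul two_ne_zero (exp_ne_zero _), log_exp]

section Softplus

variable {k : ℝ}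

theorem softplus_monotone (hk : 0 ≤ k) : Monotone (softplus k) := by
  intro a b hab
  unfold softplus
  gcongr

theorem softplus_le_log_two_add_max (hk : 0 < k) (z : ℝ) :
    softplus k z ≤ k * log 2 + max z 0 := by
  calc softplus k z ≤ k * (log 2 + max (z / k) 0) :=
        mul_le_mul_of_nonneg_left (log_one_add_exp_le _) hk.le
    _ = k * log 2 + max z 0 := by
        rw [mul_add, mul_max_of_nonneg _ _ hk.le, mul_div_cancel₀ _ hk.ne', mul_zero]

theorem softplus_div_mul_le (hk : 0 < k) {C r : ℝ} (hC : 0 ≤ C) (hr : 0 < r) :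
    softplus k (C / r) * r ≤ k * log 2 * r + C := by
  calc softplus k (C / r) * r ≤ (k * log 2 + C / r) * r := by
        gcongr
        simpa [max_eq_left (div_nonneg hC hr.le)] using softplus_le_log_two_add_max hk (C / r)
    _ = k * log 2 * r + C := by field_simp

end Softplus

theorem EuclideanSpace.sum_mul_le_norm_mul_norm {ι : Type*} [Fintype ι]
    (x y : EuclideanSpace ℝ ι) : ∑ i, x i * y i ≤ ‖x‖ * ‖y‖ := by
  have h : ∑ i, x i * y i = inner ℝ x y := by simp [PiLp.inner_apply, mul_comm]
  exact h ▸ real_inner_le_norm x y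

end

theorem stmt_11_general {n : ℕ} (k Ξ l : ℝ) (hk : 0 < k) (hl : 0 < l)
    (b ξ : EuclideanSpace ℝ (Fin n)) (M : Matrix (Fin n) (Fin n) ℝ)
    (hb : b ≠ 0) (hξ : ‖ξ‖ ≤ Ξ)
    (hMb : l * ‖b‖ ^ 2 ≤ ∑ i, ∑ j, b i * M i j * b j) :
    k * Real.log (1 + Real.exp
        (((∑ i, b i * ξ i) / (∑ i, ∑ j, b i * M i j * b j)) / k)) * ‖b‖
      ≤ k * Real.log 2 * ‖b‖ + Ξ / l := by
  have hb₀ : 0 < ‖b‖ := norm_pos_iff.2 hb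
  have hΞ : 0 ≤ Ξ := (norm_nonneg ξ).trans hξ
  have hbξ : ∑ i, b i * ξ i ≤ ‖b‖ * Ξ :=
    (EuclideanSpace.sum_mul_le_norm_mul_norm b ξ).trans (by gcongr)
  have harg : (∑ i, b i * ξ i) / (∑ i, ∑ j, b i * M i j * b j) ≤ Ξ / l / ‖b‖ :=
    calc _ ≤ ‖b‖ * Ξ / (l * ‖b‖ ^ 2) := div_le_div₀ (by positivity) hbξ (by positivity) hMb
      _ = Ξ / l / ‖b‖ := by field_simp
  calc softplus k _ * ‖b‖ ≤ softplus k (Ξ / l / ‖b‖) * ‖b‖ := by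
        gcongr
        exact softplus_monotone hk.le harg
    _ ≤ k * Real.log 2 * ‖b‖ + Ξ / l := softplus_div_mul_le hk (by positivity) hb₀

/-- For `k, Ξ, l > 0`, softplus `σ(z) = k·ln(1 + exp(z/k))`, vectors
`b ≠ 0`, `‖ξ‖ ≤ Ξ` in `ℝⁿ`, and a symmetric matrix `M` with `bᵀMb ≥ l·‖b‖²`, one has
`σ(bᵀξ/(bᵀMb))·‖b‖ ≤ k·ln(2)·‖b‖ + Ξ/l`. -/
theorem stmt_11 {n : ℕ} (hn : 0 < n) (k Ξ l : ℝ) (hk : 0 < k) (hΞ : 0 < Ξ) (hl : 0 < l)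
    (b ξ : EuclideanSpace ℝ (Fin n)) (M : Matrix (Fin n) (Fin n) ℝ)
    (hb : b ≠ 0) (hξ : ‖ξ‖ ≤ Ξ) (hsymm : M.IsSymm)
    (hMb : l * ‖b‖ ^ 2 ≤ ∑ i, ∑ j, b i * M i j * b j) :
    k * Real.log (1 + Real.exp
        (((∑ i, b i * ξ i) / (∑ i, ∑ j, b i * M i j * b j)) / k)) * ‖b‖
      ≤ k * Real.log 2 * ‖b‖ + Ξ / l :=
  stmt_11_general k Ξ l hk hl b ξ M hb hξ hMb
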